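/- arXiv:2401.14601 — 6 statements merged into one kernel-verified Lean document; each statement's English description precedes it below -/
import Mathlib

section
/- (Consistency bound for the θ-scheme.) Let H be a real Hilbert space, let a < b be real numbers, τ = b − a, and θ ∈ [1/2, 1]. Let u : [a, b] → H be twice continuously differentiable (derivatives in the norm sense). Then ‖(u(b) − u(a))/τ − θ·u′(b) − (1−θ)·u′(a)‖² ≤ θ² · τ · ∫_a^b ‖u″(s)‖² ds. -/
/-!
With `c = (1 - θ) b + θ a`, the function `F t = u t + (c - t) • u' t` has derivative
`(c - t) • u'' t`, and `F b - F a = τ • e` where `e` is the consistency error. Hence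
`τ ‖e‖ ≤ ∫ |c - t| ‖u''‖`, and Cauchy–Schwarz gives
`‖e‖² ≤ τ⁻² ∫ (c - t)² ∫ ‖u''‖² = ((1 - θ)³ + θ³) / 3 · τ ∫ ‖u''‖²`.
Finally `(1 - θ)³ + θ³ = 1 - 3θ + 3θ² ≤ 3θ²` as soon as `θ ≥ 1/3`.
-/

open MeasureTheory Set

theorem sq_integral_mul_le {α : Type*} [MeasurableSpace α] {μ : Measure α} {f g : α → ℝ}
    (hf : Integrable (fun x ↦ f x ^ 2) μ) (hg : Integrable (fun x ↦ g x ^ 2) μ)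
    (hfg : Integrable (fun x ↦ f x * g x) μ) :
    (∫ x, f x * g x ∂μ) ^ 2 ≤ (∫ x, f x ^ 2 ∂μ) * ∫ x, g x ^ 2 ∂μ := by
  have hquad : ∀ s : ℝ, 0 ≤ (∫ x, f x ^ 2 ∂μ) * (s * s) + (-2 * ∫ x, f x * g x ∂μ) * s
      + ∫ x, g x ^ 2 ∂μ := fun s ↦ by
    have hexp : ∀ x, (s * f x - g x) ^ 2 = s ^ 2 * f x ^ 2 - 2 * s * (f x * g x) + g x ^ 2 :=
      fun x ↦ by ring
    have hsq : 0 ≤ ∫ x, (s * f x - g x) ^ 2 ∂μ := integral_nonneg fun x ↦ sq_nonneg _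
    have h1 : Integrable (fun x ↦ s ^ 2 * f x ^ 2) μ := hf.const_mul _
    have h2 : Integrable (fun x ↦ 2 * s * (f x * g x)) μ := hfg.const_mul _
    simp only [hexp] at hsq
    rw [integral_add (f := fun x ↦ s ^ 2 * f x ^ 2 - 2 * s * (f x * g x)) (h1.sub h2) hg,
      integral_sub h1 h2, integral_const_mul, integral_const_mul] at hsq
    linarith
  have := discrim_le_zero hquad
  rw [discrim] at this
  linarith

theorem sq_intervalIntegral_mul_le {f g : ℝ → ℝ} {a b : ℝ} (hab : a ≤ b)
    (hf : ContinuousOn f (Icc a b)) (hg : ContinuousOn g (Icc a b)) :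
    (∫ t in a..b, f t * g t) ^ 2 ≤ (∫ t in a..b, f t ^ 2) * ∫ t in a..b, g t ^ 2 := by
  simp only [intervalIntegral.integral_of_le hab]
  exact sq_integral_mul_le ((hf.pow 2).intervalIntegrable_of_Icc hab).1
    ((hg.pow 2).intervalIntegrable_of_Icc hab).1 ((hf.mul hg).intervalIntegrable_of_Icc hab).1

section PeanoKernel

variable {E : Type*} [NormedAddCommGroup E] [NormedSpace ℝ E] {u u' u'' : ℝ → E} {a b : ℝ}

theorem hasDerivAt_add_smul_deriv (c : ℝ) {t : ℝ} (hu' : HasDerivAt u (u' t) t)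
    (hu'' : HasDerivAt u' (u'' t) t) :
    HasDerivAt (fun s ↦ u s + (c - s) • u' s) ((c - t) • u'' t) t := by
  convert hu'.add (((hasDerivAt_id t).const_sub c).smul hu'') using 1
  · rfl
  · simp

theorem norm_sub_add_smul_deriv_sub_le (hab : a ≤ b) (c : ℝ)
    (hu' : ∀ t ∈ Icc a b, HasDerivWithinAt u (u' t) (Icc a b) t)
    (hu'' : ∀ t ∈ Icc a b, HasDerivWithinAt u' (u'' t) (Icc a b) t)
    (hu''_cont : ContinuousOn u'' (Icc a b)) :
    ‖u b - u a + (c - b) • u' b - (c - a) • u' a‖ ≤ ∫ t in a..b, |c - t| * ‖u'' t‖ := by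
  set F : ℝ → E := fun s ↦ u s + (c - s) • u' s
  have hF : ∀ t ∈ Ioo a b, HasDerivAt F ((c - t) • u'' t) t := fun t ht ↦
    have hIcc : Icc a b ∈ nhds t := Icc_mem_nhds ht.1 ht.2
    hasDerivAt_add_smul_deriv c ((hu' t (Ioo_subset_Icc_self ht)).hasDerivAt hIcc)
      ((hu'' t (Ioo_subset_Icc_self ht)).hasDerivAt hIcc)
  have hF_cont : ContinuousOn F (Icc a b) :=
    (HasDerivWithinAt.continuousOn hu').add
      ((continuous_const.sub continuous_id).continuousOn.smul (HasDerivWithinAt.continuousOn hu''))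
  have hbound_cont : ContinuousOn (fun t ↦ |c - t| * ‖u'' t‖) (Icc a b) :=
    (continuous_const.sub continuous_id).abs.continuousOn.mul hu''_cont.norm
  have := norm_sub_le_integral_of_norm_deriv_le_of_le hab hF_cont
    (fun t ht ↦ (hF t ht).differentiableAt.differentiableWithinAt)
    (.of_forall fun t ht ↦ by rw [(hF t ht).deriv, norm_smul, Real.norm_eq_abs])
    (hbound_cont.intervalIntegrable_of_Icc hab)
  convert this using 2
  simp only [F]
  abel

end PeanoKernel

theorem theta_scheme_consistency_bound_general
    {H : Type*} [NormedAddCommGroup H] [InnerProductSpace ℝ H]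
    (a b : ℝ) (hab : a < b) (τ θ : ℝ) (hτ : τ = b - a)
    (hθ : θ ∈ Set.Icc (1/2 : ℝ) 1)
    (u u' u'' : ℝ → H)
    (hu' : ∀ t ∈ Set.Icc a b, HasDerivWithinAt u (u' t) (Set.Icc a b) t)
    (hu'' : ∀ t ∈ Set.Icc a b, HasDerivWithinAt u' (u'' t) (Set.Icc a b) t)
    (hu''_cont : ContinuousOn u'' (Set.Icc a b)) :
    ‖(1 / τ) • (u b - u a) - θ • u' b - (1 - θ) • u' a‖^2 ≤
      θ^2 * τ * ∫ s in a..b, ‖u'' s‖^2 := by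
  subst hτ
  have hτ : 0 < b - a := sub_pos.2 hab
  set c := (1 - θ) * b + θ * a
  have hkernel : (1 / (b - a)) • (u b - u a) - θ • u' b - (1 - θ) • u' a =
      (1 / (b - a)) • (u b - u a + (c - b) • u' b - (c - a) • u' a) := by
    match_scalars <;> field_simp <;> ring
  have hkernel_sq : ∫ t in a..b, (c - t) ^ 2 = ((1 - θ) ^ 3 + θ ^ 3) / 3 * (b - a) ^ 3 := by
    rw [intervalIntegral.integral_comp_sub_left (fun t ↦ t ^ 2), integral_pow]
    ring
  rw [hkernel, norm_smul, mul_pow]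
  calc _ ≤ ‖1 / (b - a)‖ ^ 2 * (∫ t in a..b, |c - t| * ‖u'' t‖) ^ 2 := by
        gcongr
        exact norm_sub_add_smul_deriv_sub_le hab.le c hu' hu'' hu''_cont
    _ ≤ ‖1 / (b - a)‖ ^ 2 * ((∫ t in a..b, (c - t) ^ 2) * ∫ t in a..b, ‖u'' t‖ ^ 2) := by
        gcongr
        simpa only [sq_abs] using
          sq_intervalIntegral_mul_le (f := fun t ↦ |c - t|) hab.le (by fun_prop) hu''_cont.norm
    _ = ((1 - θ) ^ 3 + θ ^ 3) / 3 * (b - a) * ∫ t in a..b, ‖u'' t‖ ^ 2 := by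
        rw [hkernel_sq, Real.norm_of_nonneg (by positivity)]
        field_simp
    _ ≤ θ ^ 2 * (b - a) * ∫ s in a..b, ‖u'' s‖ ^ 2 := by
        have : 0 ≤ ∫ t in a..b, ‖u'' t‖ ^ 2 :=
          intervalIntegral.integral_nonneg hab.le fun t _ ↦ sq_nonneg _
        gcongr
        nlinarith [hθ.1]

theorem theta_scheme_consistency_bound
    {H : Type*} [NormedAddCommGroup H] [InnerProductSpace ℝ H] [CompleteSpace H]
    (a b : ℝ) (hab : a < b) (τ θ : ℝ) (hτ : τ = b - a)
    (hθ : θ ∈ Set.Icc (1/2 : ℝ) 1)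
    (u u' u'' : ℝ → H)
    (hu' : ∀ t ∈ Set.Icc a b, HasDerivWithinAt u (u' t) (Set.Icc a b) t)
    (hu'' : ∀ t ∈ Set.Icc a b, HasDerivWithinAt u' (u'' t) (Set.Icc a b) t)
    (hu''_cont : ContinuousOn u'' (Set.Icc a b)) :
    ‖(1 / τ) • (u b - u a) - θ • u' b - (1 - θ) • u' a‖^2 ≤
      θ^2 * τ * ∫ s in a..b, ‖u'' s‖^2 :=
  theta_scheme_consistency_bound_general a b hab τ θ hτ hθ u u' u'' hu' hu'' hu''_cont
end

section
/- (Consistency bound for the Crank–Nicolson scheme.) Let H be a real Hilbert space, let a < b be real numbers and τ = b − a. Let u : [a, b] → H be three times continuously differentiable (derivatives in the norm sense). Then ‖(u(b) − u(a))/τ − (1/2)·(u′(b) + u′(a))‖² ≤ (τ³/4) · ∫_a^b ‖u‴(s)‖² ds. -/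
/-!
The Crank–Nicolson defect is the trapezoidal-rule error for `∫ₐᵇ u'`. Integrating by parts twice
against the kernel `(s - a)(s - b)`, which vanishes at both ends, gives the Peano representation
`(u b - u a)/τ - (u' a + u' b)/2 = (1/(2τ)) ∫ₐᵇ (s - a)(s - b) u'''(s) ds`.
Since `|(s - a)(s - b)| ≤ τ²/4` on `[a, b]`, the defect has norm at most `(τ/8) ∫ₐᵇ ‖u'''‖`,
and Cauchy–Schwarz turns the square of this into `(τ³/64) ∫ₐᵇ ‖u'''‖²`.
-/

open MeasureTheory Set

theorem sq_intervalIntegral_le_mul_intervalIntegral_sq {f : ℝ → ℝ} {a b : ℝ} (hab : a ≤ b)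
    (hf : IntervalIntegrable f volume a b)
    (hf2 : IntervalIntegrable (fun x => f x ^ 2) volume a b) :
    (∫ x in a..b, f x) ^ 2 ≤ (b - a) * ∫ x in a..b, f x ^ 2 := by
  set I := ∫ x in a..b, f x
  set J := ∫ x in a..b, f x ^ 2
  have hexpand : ∫ x in a..b, ((b - a) * f x - I) ^ 2 = (b - a) * ((b - a) * J - I ^ 2) := by
    have hsq : ∀ x, ((b - a) * f x - I) ^ 2 =
        (b - a) ^ 2 * f x ^ 2 - 2 * (b - a) * I * f x + I ^ 2 := fun x => by ring
    simp only [hsq]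
    rw [intervalIntegral.integral_add ((hf2.const_mul _).sub (hf.const_mul _))
        intervalIntegrable_const,
      intervalIntegral.integral_sub (hf2.const_mul _) (hf.const_mul _),
      intervalIntegral.integral_const_mul, intervalIntegral.integral_const_mul,
      intervalIntegral.integral_const, smul_eq_mul]
    ring
  have hnonneg : 0 ≤ (b - a) * ((b - a) * J - I ^ 2) :=
    hexpand ▸ intervalIntegral.integral_nonneg hab fun x _ => sq_nonneg _
  rcases hab.eq_or_lt with rfl | hlt
  · simp [I]
  · linarith [(mul_nonneg_iff_of_pos_left (sub_pos.2 hlt)).1 hnonneg]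

theorem abs_mul_sub_sub_le {a b s : ℝ} (hs : s ∈ Icc a b) :
    |(s - a) * (s - b)| ≤ (b - a) ^ 2 / 4 := by
  rw [abs_mul, abs_of_nonneg (sub_nonneg.2 hs.1), abs_of_nonpos (sub_nonpos.2 hs.2)]
  nlinarith [sq_nonneg (a + b - 2 * s)]

section

variable {E : Type*} [NormedAddCommGroup E] [NormedSpace ℝ E] {a b : ℝ}

theorem hasDerivWithinAt_trapezoid_antideriv {w w' : ℝ → E} {w'' : E} {s : Set ℝ} {t : ℝ}
    (hw : HasDerivWithinAt w (w' t) s t) (hw' : HasDerivWithinAt w' w'' s t) :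
    HasDerivWithinAt (fun x => ((x - a) * (x - b)) • w' x - (2 * x - a - b) • w x)
      (((t - a) * (t - b)) • w'' - (2 : ℝ) • w t) s t := by
  have hk : HasDerivWithinAt (fun x => (x - a) * (x - b)) (2 * t - a - b) s t :=
    (((hasDerivWithinAt_id t s).sub_const a).mul
      ((hasDerivWithinAt_id t s).sub_const b)).congr_deriv (by simp only [id]; ring)
  have hl : HasDerivWithinAt (fun x => 2 * x - a - b) 2 s t :=
    ((((hasDerivWithinAt_id t s).const_mul 2).sub_const a).sub_const b).congr_deriv (by ring)
  exact ((hk.smul hw').sub (hl.smul hw)).congr_deriv (by module)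

theorem norm_integral_kernel_smul_le {w : ℝ → E} (hab : a ≤ b) (hw : ContinuousOn w (Icc a b)) :
    ‖∫ t in a..b, ((t - a) * (t - b)) • w t‖ ≤ (b - a) ^ 2 / 4 * ∫ t in a..b, ‖w t‖ := by
  rw [← intervalIntegral.integral_const_mul]
  refine intervalIntegral.norm_integral_le_of_norm_le hab (ae_of_all _ fun t ht => ?_)
    ((hw.norm.intervalIntegrable_of_Icc hab).const_mul _)
  rw [norm_smul, Real.norm_eq_abs]
  exact mul_le_mul_of_nonneg_right (abs_mul_sub_sub_le (Ioc_subset_Icc_self ht)) (norm_nonneg _)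

variable [CompleteSpace E]

theorem integral_eq_sub_of_hasDerivWithinAt_Icc {f f' : ℝ → E} (hab : a ≤ b)
    (hf : ∀ t ∈ Icc a b, HasDerivWithinAt f (f' t) (Icc a b) t)
    (hint : IntervalIntegrable f' volume a b) :
    ∫ t in a..b, f' t = f b - f a :=
  intervalIntegral.integral_eq_sub_of_hasDerivAt_of_le hab
    (fun t ht => (hf t ht).continuousWithinAt)
    (fun t ht => (hf t (Ioo_subset_Icc_self ht)).hasDerivAt (Icc_mem_nhds ht.1 ht.2)) hint

theorem integral_eq_trapezoid_add_integral_kernel_smul {w w' w'' : ℝ → E} (hab : a ≤ b)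
    (hw : ∀ t ∈ Icc a b, HasDerivWithinAt w (w' t) (Icc a b) t)
    (hw' : ∀ t ∈ Icc a b, HasDerivWithinAt w' (w'' t) (Icc a b) t)
    (hw'' : ContinuousOn w'' (Icc a b)) :
    ∫ t in a..b, w t =
      ((b - a) / 2) • (w a + w b) + (1 / 2 : ℝ) • ∫ t in a..b, ((t - a) * (t - b)) • w'' t := by
  have hw_cont : ContinuousOn w (Icc a b) := fun t ht => (hw t ht).continuousWithinAt
  have hkw'' : IntervalIntegrable (fun t => ((t - a) * (t - b)) • w'' t) volume a b :=
    (((continuous_id.sub continuous_const).mul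
      (continuous_id.sub continuous_const)).continuousOn.smul hw'').intervalIntegrable_of_Icc hab
  have h2w : IntervalIntegrable (fun t => (2 : ℝ) • w t) volume a b :=
    (hw_cont.const_smul (2 : ℝ)).intervalIntegrable_of_Icc hab
  have hftc := integral_eq_sub_of_hasDerivWithinAt_Icc hab
    (fun t ht => hasDerivWithinAt_trapezoid_antideriv (a := a) (b := b) (hw t ht) (hw' t ht))
    (hkw''.sub h2w)
  rw [intervalIntegral.integral_sub hkw'' h2w, intervalIntegral.integral_smul] at hftc
  linear_combination (norm := module) (-1 / 2 : ℝ) • hftc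

variable {u u' u'' u''' : ℝ → E}

theorem crankNicolson_defect_eq_integral_kernel_smul (hab : a < b)
    (hu : ∀ t ∈ Icc a b, HasDerivWithinAt u (u' t) (Icc a b) t)
    (hu' : ∀ t ∈ Icc a b, HasDerivWithinAt u' (u'' t) (Icc a b) t)
    (hu'' : ∀ t ∈ Icc a b, HasDerivWithinAt u'' (u''' t) (Icc a b) t)
    (hu''' : ContinuousOn u''' (Icc a b)) :
    (1 / (b - a)) • (u b - u a) - (1 / 2 : ℝ) • (u' b + u' a) =
      (1 / (2 * (b - a))) • ∫ t in a..b, ((t - a) * (t - b)) • u''' t := by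
  have hu'_int : IntervalIntegrable u' volume a b :=
    ContinuousOn.intervalIntegrable_of_Icc hab.le fun t ht => (hu' t ht).continuousWithinAt
  rw [← integral_eq_sub_of_hasDerivWithinAt_Icc hab.le hu hu'_int,
    integral_eq_trapezoid_add_integral_kernel_smul hab.le hu' hu'' hu''']
  have hba : b - a ≠ 0 := (sub_pos.2 hab).ne'
  match_scalars <;> field_simp <;> ring

theorem norm_crankNicolson_defect_le (hab : a < b)
    (hu : ∀ t ∈ Icc a b, HasDerivWithinAt u (u' t) (Icc a b) t)
    (hu' : ∀ t ∈ Icc a b, HasDerivWithinAt u' (u'' t) (Icc a b) t)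
    (hu'' : ∀ t ∈ Icc a b, HasDerivWithinAt u'' (u''' t) (Icc a b) t)
    (hu''' : ContinuousOn u''' (Icc a b)) :
    ‖(1 / (b - a)) • (u b - u a) - (1 / 2 : ℝ) • (u' b + u' a)‖ ≤
      (b - a) / 8 * ∫ t in a..b, ‖u''' t‖ := by
  have hba : 0 < b - a := sub_pos.2 hab
  rw [crankNicolson_defect_eq_integral_kernel_smul hab hu hu' hu'' hu''', norm_smul,
    Real.norm_of_nonneg (by positivity)]
  calc 1 / (2 * (b - a)) * ‖∫ t in a..b, ((t - a) * (t - b)) • u''' t‖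
      ≤ 1 / (2 * (b - a)) * ((b - a) ^ 2 / 4 * ∫ t in a..b, ‖u''' t‖) :=
        mul_le_mul_of_nonneg_left (norm_integral_kernel_smul_le hab.le hu''') (by positivity)
    _ = (b - a) / 8 * ∫ t in a..b, ‖u''' t‖ := by field_simp; ring

end

theorem crank_nicolson_consistency_bound
    {H : Type*} [NormedAddCommGroup H] [InnerProductSpace ℝ H] [CompleteSpace H]
    (a b : ℝ) (hab : a < b) (τ : ℝ) (hτ : τ = b - a)
    (u u' u'' u''' : ℝ → H)
    (hu' : ∀ t ∈ Set.Icc a b, HasDerivWithinAt u (u' t) (Set.Icc a b) t)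
    (hu'' : ∀ t ∈ Set.Icc a b, HasDerivWithinAt u' (u'' t) (Set.Icc a b) t)
    (hu''' : ∀ t ∈ Set.Icc a b, HasDerivWithinAt u'' (u''' t) (Set.Icc a b) t)
    (hu'''_cont : ContinuousOn u''' (Set.Icc a b)) :
    ‖(1 / τ) • (u b - u a) - (1/2 : ℝ) • (u' b + u' a)‖^2 ≤
      (τ^3 / 4) * ∫ s in a..b, ‖u''' s‖^2 := by
  subst hτ
  have hτ : 0 < b - a := sub_pos.2 hab
  have hdefect := norm_crankNicolson_defect_le hab hu' hu'' hu''' hu'''_cont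
  have hCS := sq_intervalIntegral_le_mul_intervalIntegral_sq hab.le
    (hu'''_cont.norm.intervalIntegrable_of_Icc hab.le)
    ((hu'''_cont.norm.pow 2).intervalIntegrable_of_Icc hab.le)
  have hJ : 0 ≤ ∫ s in a..b, ‖u''' s‖ ^ 2 :=
    intervalIntegral.integral_nonneg hab.le fun s _ => sq_nonneg _
  calc ‖(1 / (b - a)) • (u b - u a) - (1 / 2 : ℝ) • (u' b + u' a)‖ ^ 2
      ≤ ((b - a) / 8 * ∫ s in a..b, ‖u''' s‖) ^ 2 := pow_le_pow_left₀ (norm_nonneg _) hdefect 2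
    _ = (b - a) ^ 2 / 64 * (∫ s in a..b, ‖u''' s‖) ^ 2 := by ring
    _ ≤ (b - a) ^ 2 / 64 * ((b - a) * ∫ s in a..b, ‖u''' s‖ ^ 2) := by gcongr
    _ ≤ (b - a) ^ 3 / 4 * ∫ s in a..b, ‖u''' s‖ ^ 2 := by nlinarith [pow_pos hτ 3]
end

section
/- (Uniqueness for the implicit θ-scheme.) Let H and K be real inner product spaces, B : H → K a linear map, τ > 0, θ ∈ [1/2, 1], N ∈ ℕ, and let E⁰, E¹, …, E^N ∈ H satisfy E⁰ = 0 and, for every 1 ≤ n ≤ N and every v ∈ H, ⟨(Eⁿ − Eⁿ⁻¹)/τ, v⟩ + ⟨B(θ·Eⁿ + (1−θ)·Eⁿ⁻¹), B v⟩ = 0. Then Eⁿ = 0 for every 0 ≤ n ≤ N. -/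
open scoped RealInnerProductSpace

lemma eq_zero_of_inner_smul_add_inner_map_smul_eq_zero
    {H K : Type*} [NormedAddCommGroup H] [InnerProductSpace ℝ H]
    [NormedAddCommGroup K] [InnerProductSpace ℝ K]
    {B : H →ₗ[ℝ] K} {a b : ℝ} (ha : 0 < a) (hb : 0 ≤ b) {x : H}
    (h : ⟪a • x, x⟫ + ⟪B (b • x), B x⟫ = 0) : x = 0 := by
  rw [map_smul, real_inner_smul_left, real_inner_smul_left, real_inner_self_eq_norm_sq,
    real_inner_self_eq_norm_sq] at h
  have hBx : 0 ≤ b * ‖B x‖ ^ 2 := by positivity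
  have hx : a * ‖x‖ ^ 2 = 0 := by linarith [mul_nonneg ha.le (sq_nonneg ‖x‖)]
  simpa [ha.ne'] using hx

theorem theta_scheme_uniqueness
    {H K : Type*} [NormedAddCommGroup H] [InnerProductSpace ℝ H]
    [NormedAddCommGroup K] [InnerProductSpace ℝ K]
    (B : H →ₗ[ℝ] K) (τ θ : ℝ) (hτ : 0 < τ) (hθ : θ ∈ Set.Icc (1/2 : ℝ) 1)
    (N : ℕ) (E : ℕ → H) (hE0 : E 0 = 0)
    (hrec : ∀ n, 1 ≤ n → n ≤ N → ∀ v : H,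
      ⟪(1 / τ) • (E n - E (n - 1)), v⟫ +
        ⟪B (θ • E n + (1 - θ) • E (n - 1)), B v⟫ = 0) :
    ∀ n ≤ N, E n = 0 := by
  intro n hn
  induction n with
  | zero => exact hE0
  | succ m ih =>
    have hprev : E m = 0 := ih (Nat.le_of_succ_le hn)
    have hstep := hrec (m + 1) (Nat.le_add_left 1 m) hn (E (m + 1))
    simp only [Nat.add_sub_cancel, hprev, sub_zero, smul_zero, add_zero] at hstep
    exact eq_zero_of_inner_smul_add_inner_map_smul_eq_zero (one_div_pos.mpr hτ)
      (by linarith [hθ.1]) hstep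
end

section
/- (Stability of the implicit θ-scheme.) Let H and K be real inner product spaces, B : H → K a linear map, and C > 0 a constant with ‖v‖ ≤ C·‖B v‖ for all v ∈ H. Let τ > 0, θ ∈ [1/2, 1], N ∈ ℕ, and let U⁰, …, U^N ∈ H and F¹, …, F^N ∈ H satisfy, for every 1 ≤ n ≤ N, ⟨(Uⁿ − Uⁿ⁻¹)/τ, θ·Uⁿ + (1−θ)·Uⁿ⁻¹⟩ + ‖B(θ·Uⁿ + (1−θ)·Uⁿ⁻¹)‖² = ⟨Fⁿ, θ·Uⁿ + (1−θ)·Uⁿ⁻¹⟩. Then for every 0 ≤ n ≤ N, ‖Uⁿ‖² ≤ ‖U⁰‖² + (C²·τ/2) · Σ_{j=1}^{n} ‖Fʲ‖². -/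
/-!
Testing the scheme with the θ-average `W = θ Uⁿ + (1-θ) Uⁿ⁻¹` itself is the discrete energy
method: `⟪Uⁿ - Uⁿ⁻¹, W⟫ = (‖Uⁿ‖² - ‖Uⁿ⁻¹‖²)/2 + (θ - 1/2)‖Uⁿ - Uⁿ⁻¹‖²`, whose second term is
nonnegative for `θ ≥ 1/2`, while by coercivity and Young's inequality the forcing is absorbed by
the dissipation, `⟪F, W⟫ - ‖B W‖² ≤ C²‖F‖²/4`. Each step therefore raises `‖U‖²` by at most
`C²τ‖Fⁿ‖²/2`, and the bound follows by telescoping.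
-/

open scoped RealInnerProductSpace

section EnergyEstimate

variable {H K : Type*} [NormedAddCommGroup H] [InnerProductSpace ℝ H]
  [NormedAddCommGroup K] [InnerProductSpace ℝ K]

theorem real_inner_sub_smul_add_one_sub_smul (a b : H) (θ : ℝ) :
    ⟪a - b, θ • a + (1 - θ) • b⟫ = (‖a‖ ^ 2 - ‖b‖ ^ 2) / 2 + (θ - 1 / 2) * ‖a - b‖ ^ 2 := by
  simp only [← real_inner_self_eq_norm_sq, inner_sub_left, inner_sub_right, inner_add_right,
    real_inner_smul_right, real_inner_comm b a]
  ring

theorem real_inner_sub_sq_norm_le_of_coercive (B : H →ₗ[ℝ] K) {C : ℝ}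
    (hcoer : ∀ v : H, ‖v‖ ≤ C * ‖B v‖) (f w : H) :
    ⟪f, w⟫ - ‖B w‖ ^ 2 ≤ C ^ 2 / 4 * ‖f‖ ^ 2 := by
  have hfw : ⟪f, w⟫ ≤ ‖f‖ * (C * ‖B w‖) :=
    (real_inner_le_norm f w).trans (mul_le_mul_of_nonneg_left (hcoer w) (norm_nonneg f))
  nlinarith [sq_nonneg (C * ‖f‖ - 2 * ‖B w‖)]

theorem sq_norm_le_of_theta_step (B : H →ₗ[ℝ] K) {C : ℝ} (hcoer : ∀ v : H, ‖v‖ ≤ C * ‖B v‖)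
    {τ θ : ℝ} (hτ : 0 < τ) (hθ : 1 / 2 ≤ θ) {a b f : H}
    (hstep : ⟪(1 / τ) • (a - b), θ • a + (1 - θ) • b⟫ + ‖B (θ • a + (1 - θ) • b)‖ ^ 2 =
      ⟪f, θ • a + (1 - θ) • b⟫) :
    ‖a‖ ^ 2 ≤ ‖b‖ ^ 2 + C ^ 2 * τ / 2 * ‖f‖ ^ 2 := by
  rw [real_inner_smul_left, real_inner_sub_smul_add_one_sub_smul] at hstep
  have hforcing := real_inner_sub_sq_norm_le_of_coercive B hcoer f (θ • a + (1 - θ) • b)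
  have hdissip : 0 ≤ (θ - 1 / 2) * ‖a - b‖ ^ 2 := mul_nonneg (by linarith) (sq_nonneg _)
  have hincr : 1 / τ * ((‖a‖ ^ 2 - ‖b‖ ^ 2) / 2) ≤ C ^ 2 / 4 * ‖f‖ ^ 2 := by
    linarith [mul_nonneg (one_div_nonneg.2 hτ.le) hdissip]
  rw [one_div_mul_eq_div, div_le_iff₀ hτ] at hincr
  linarith

end EnergyEstimate

theorem le_add_sum_Icc_of_le_add {x c : ℕ → ℝ} {N : ℕ} (h : ∀ n < N, x (n + 1) ≤ x n + c (n + 1)) :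
    ∀ n ≤ N, x n ≤ x 0 + ∑ j ∈ Finset.Icc 1 n, c j := by
  intro n hn
  induction n with
  | zero => simp
  | succ n ih =>
    rw [Finset.sum_Icc_succ_top (Nat.le_add_left 1 n)]
    linarith [h n hn, ih (Nat.le_of_succ_le hn)]

theorem theta_scheme_stability_general
    {H K : Type*} [NormedAddCommGroup H] [InnerProductSpace ℝ H]
    [NormedAddCommGroup K] [InnerProductSpace ℝ K]
    (B : H →ₗ[ℝ] K) (C : ℝ)
    (hcoer : ∀ v : H, ‖v‖ ≤ C * ‖B v‖)
    (τ θ : ℝ) (hτ : 0 < τ) (hθ : θ ∈ Set.Icc (1/2 : ℝ) 1)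
    (N : ℕ) (U F : ℕ → H)
    (hrec : ∀ n, 1 ≤ n → n ≤ N →
      ⟪(1 / τ) • (U n - U (n - 1)), θ • U n + (1 - θ) • U (n - 1)⟫ +
        ‖B (θ • U n + (1 - θ) • U (n - 1))‖^2 =
      ⟪F n, θ • U n + (1 - θ) • U (n - 1)⟫) :
    ∀ n ≤ N, ‖U n‖^2 ≤ ‖U 0‖^2 + (C^2 * τ / 2) * ∑ j ∈ Finset.Icc 1 n, ‖F j‖^2 := by
  intro n hn
  rw [Finset.mul_sum]
  refine le_add_sum_Icc_of_le_add (x := fun k => ‖U k‖ ^ 2)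
    (c := fun j => C ^ 2 * τ / 2 * ‖F j‖ ^ 2) (fun k hk => ?_) n hn
  have hstep := hrec (k + 1) (Nat.le_add_left 1 k) hk
  rw [Nat.add_sub_cancel] at hstep
  exact sq_norm_le_of_theta_step B hcoer hτ hθ.1 hstep

theorem theta_scheme_stability
    {H K : Type*} [NormedAddCommGroup H] [InnerProductSpace ℝ H]
    [NormedAddCommGroup K] [InnerProductSpace ℝ K]
    (B : H →ₗ[ℝ] K) (C : ℝ) (hC : 0 < C)
    (hcoer : ∀ v : H, ‖v‖ ≤ C * ‖B v‖)
    (τ θ : ℝ) (hτ : 0 < τ) (hθ : θ ∈ Set.Icc (1/2 : ℝ) 1)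
    (N : ℕ) (U F : ℕ → H)
    (hrec : ∀ n, 1 ≤ n → n ≤ N →
      ⟪(1 / τ) • (U n - U (n - 1)), θ • U n + (1 - θ) • U (n - 1)⟫ +
        ‖B (θ • U n + (1 - θ) • U (n - 1))‖^2 =
      ⟪F n, θ • U n + (1 - θ) • U (n - 1)⟫) :
    ∀ n ≤ N, ‖U n‖^2 ≤ ‖U 0‖^2 + (C^2 * τ / 2) * ∑ j ∈ Finset.Icc 1 n, ‖F j‖^2 :=
  theta_scheme_stability_general B C hcoer τ θ hτ hθ N U F hrec
end

section
/- Let H and K be real Hilbert spaces, B : H → K a continuous linear map, T̄ > 0, let u : [0, T̄] → H be continuously differentiable and g : [0, T̄] → H continuous, and suppose ‖u′(t)‖² + ⟨B u(t), B u′(t)⟩ = −⟨g(t), u′(t)⟩ for all t ∈ [0, T̄]. Then for all t ∈ [0, T̄], ∫_0^t ‖u′(s)‖² ds + ‖B u(t)‖² ≤ ‖B u(0)‖² + ∫_0^t ‖g(s)‖² ds. -/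
open MeasureTheory
open scoped RealInnerProductSpace

theorem elliptic_projection_energy_estimate
    {H K : Type*} [NormedAddCommGroup H] [InnerProductSpace ℝ H] [CompleteSpace H]
    [NormedAddCommGroup K] [InnerProductSpace ℝ K] [CompleteSpace K]
    (B : H →L[ℝ] K) (T : ℝ) (hT : 0 < T)
    (u u' g : ℝ → H)
    (hu' : ∀ t ∈ Set.Icc (0:ℝ) T, HasDerivWithinAt u (u' t) (Set.Icc (0:ℝ) T) t)
    (hu'_cont : ContinuousOn u' (Set.Icc (0:ℝ) T))
    (hg_cont : ContinuousOn g (Set.Icc (0:ℝ) T))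
    (heq : ∀ t ∈ Set.Icc (0:ℝ) T,
      ‖u' t‖^2 + ⟪B (u t), B (u' t)⟫ = -⟪g t, u' t⟫) :
    ∀ t ∈ Set.Icc (0:ℝ) T,
      (∫ s in (0:ℝ)..t, ‖u' s‖^2) + ‖B (u t)‖^2 ≤
        ‖B (u 0)‖^2 + ∫ s in (0:ℝ)..t, ‖g s‖^2 := by
  have huIcc : Set.uIcc (0:ℝ) T = Set.Icc (0:ℝ) T := Set.uIcc_of_le hT.le
  -- the integrand
  set f : ℝ → ℝ := fun s => ‖u' s‖^2 - ‖g s‖^2 with hf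
  have hu'n : ContinuousOn (fun s => ‖u' s‖^2) (Set.Icc (0:ℝ) T) :=
    (hu'_cont.norm).pow 2
  have hgn : ContinuousOn (fun s => ‖g s‖^2) (Set.Icc (0:ℝ) T) :=
    (hg_cont.norm).pow 2
  have hfc : ContinuousOn f (Set.Icc (0:ℝ) T) := hu'n.sub hgn
  have hfint : IntegrableOn f (Set.uIcc (0:ℝ) T) := by
    rw [huIcc]; exact hfc.integrableOn_Icc
  -- the energy function
  set φ : ℝ → ℝ := fun s => (∫ r in (0:ℝ)..s, f r) + ‖B (u s)‖^2 with hφ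
  -- B ∘ u has derivative B (u' s)
  have hBu : ∀ s ∈ Set.Icc (0:ℝ) T,
      HasDerivWithinAt (fun r => B (u r)) (B (u' s)) (Set.Icc (0:ℝ) T) s := by
    intro s hs
    exact (B.hasFDerivAt.comp_hasDerivWithinAt s (hu' s hs))
  have hBn : ∀ s ∈ Set.Icc (0:ℝ) T,
      HasDerivWithinAt (fun r => ‖B (u r)‖^2) (2 * ⟪B (u s), B (u' s)⟫)
        (Set.Icc (0:ℝ) T) s := by
    intro s hs
    have h1 : HasDerivWithinAt (fun r => ⟪B (u r), B (u r)⟫)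
        (⟪B (u s), B (u' s)⟫ + ⟪B (u' s), B (u s)⟫) (Set.Icc (0:ℝ) T) s :=
      (hBu s hs).inner ℝ (hBu s hs)
    have h2 : (fun r => ⟪B (u r), B (u r)⟫) = fun r => ‖B (u r)‖^2 := by
      funext r; rw [real_inner_self_eq_norm_sq]
    rw [h2] at h1
    convert h1 using 1
    rw [real_inner_comm (B (u s)) (B (u' s))]; ring
  -- continuity of φ
  have hφc : ContinuousOn φ (Set.Icc (0:ℝ) T) := by
    apply ContinuousOn.add
    · have := intervalIntegral.continuousOn_primitive_interval (a := (0:ℝ)) (b := T)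
        (μ := volume) (f := f) hfint
      rwa [huIcc] at this
    · exact ((B.continuous.comp_continuousOn
        (fun s hs => (hu' s hs).continuousWithinAt)).norm).pow 2
  -- derivative of φ at interior points
  have hderiv : ∀ x ∈ Set.Ioo (0:ℝ) T, HasDerivAt φ
      (f x + 2 * ⟪B (u x), B (u' x)⟫) x := by
    intro x hx
    have hxIcc : x ∈ Set.Icc (0:ℝ) T := Set.Ioo_subset_Icc_self hx
    have hnhds : Set.Icc (0:ℝ) T ∈ nhds x := Icc_mem_nhds hx.1 hx.2
    have hint : IntervalIntegrable f volume 0 x := by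
      apply (hfc.mono ?_).intervalIntegrable
      rw [Set.uIcc_of_le hx.1.le]
      exact Set.Icc_subset_Icc le_rfl hxIcc.2
    have hmeas : StronglyMeasurableAtFilter f (nhds x) :=
      ⟨Set.Icc 0 T, hnhds, hfc.aestronglyMeasurable measurableSet_Icc⟩
    have hca : ContinuousAt f x := hfc.continuousAt hnhds
    have h1 : HasDerivAt (fun s => ∫ r in (0:ℝ)..s, f r) (f x) x :=
      intervalIntegral.integral_hasDerivAt_right hint hmeas hca
    have h2 : HasDerivAt (fun r => ‖B (u r)‖^2) (2 * ⟪B (u x), B (u' x)⟫) x :=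
      (hBn x hxIcc).hasDerivAt hnhds
    exact h1.add h2
  -- deriv is nonpositive
  have hanti : AntitoneOn φ (Set.Icc (0:ℝ) T) := by
    apply antitoneOn_of_deriv_nonpos (convex_Icc 0 T) hφc
    · rw [interior_Icc]
      exact fun x hx => ((hderiv x hx).differentiableAt).differentiableWithinAt
    · rw [interior_Icc]
      intro x hx
      rw [(hderiv x hx).deriv]
      have hxIcc : x ∈ Set.Icc (0:ℝ) T := Set.Ioo_subset_Icc_self hx
      have h := heq x hxIcc
      have hkey : f x + 2 * ⟪B (u x), B (u' x)⟫ = -‖u' x + g x‖^2 := by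
        have h3 : ⟪B (u x), B (u' x)⟫ = -⟪g x, u' x⟫ - ‖u' x‖^2 := by linarith
        have hexp : ‖u' x + g x‖^2 = ‖u' x‖^2 + 2 * ⟪u' x, g x⟫ + ‖g x‖^2 :=
          norm_add_sq_real _ _
        have hgc : ⟪g x, u' x⟫ = ⟪u' x, g x⟫ := real_inner_comm _ _
        rw [h3, hf]
        simp only [hexp, hgc]
        ring
      rw [hkey]
      simp [neg_nonpos, sq_nonneg]
  -- conclude
  intro t ht
  have := hanti (Set.left_mem_Icc.2 hT.le) ht ht.1
  have hφ0 : φ 0 = ‖B (u 0)‖^2 := by simp [hφ]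
  have hu'int : IntervalIntegrable (fun s => ‖u' s‖^2) volume 0 t := by
    apply (hu'n.mono ?_).intervalIntegrable
    rw [Set.uIcc_of_le ht.1]
    exact Set.Icc_subset_Icc le_rfl ht.2
  have hgint : IntervalIntegrable (fun s => ‖g s‖^2) volume 0 t := by
    apply (hgn.mono ?_).intervalIntegrable
    rw [Set.uIcc_of_le ht.1]
    exact Set.Icc_subset_Icc le_rfl ht.2
  have hsplit : (∫ r in (0:ℝ)..t, f r)
      = (∫ s in (0:ℝ)..t, ‖u' s‖^2) - ∫ s in (0:ℝ)..t, ‖g s‖^2 :=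
    intervalIntegral.integral_sub hu'int hgint
  have hφt : φ t = (∫ s in (0:ℝ)..t, ‖u' s‖^2) - (∫ s in (0:ℝ)..t, ‖g s‖^2)
      + ‖B (u t)‖^2 := by rw [hφ]; simp only [hsplit]
  rw [hφ0, hφt] at this
  linarith
end

section
/- (Energy-norm error recursion for the implicit θ-scheme.) Let H and K be real inner product spaces, B : H → K a linear map, τ > 0, θ ∈ [1/2, 1], N ∈ ℕ, and let η⁰, …, η^N ∈ H and r¹, …, r^N ∈ H satisfy, for every 1 ≤ n ≤ N and every v ∈ H, ⟨(ηⁿ − ηⁿ⁻¹)/τ, v⟩ + ⟨B(θ·ηⁿ + (1−θ)·ηⁿ⁻¹), B v⟩ = ⟨rⁿ, v⟩. Then for every 0 ≤ n ≤ N, ‖B ηⁿ‖² ≤ ‖B η⁰‖² + (τ/2) · Σ_{j=1}^{n} ‖rʲ‖². -/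
/-!
Testing the scheme with `v = ηⁿ - ηⁿ⁻¹` turns the first term into `‖ηⁿ - ηⁿ⁻¹‖² / τ` and, for
`θ ≥ 1/2`, the second into at least `(‖Bηⁿ‖² - ‖Bηⁿ⁻¹‖²) / 2`. Young's inequality absorbs
`⟨rⁿ, ηⁿ - ηⁿ⁻¹⟩` into the first term at the price of `τ/4 ‖rⁿ‖²`, so each step raises
`‖Bη‖²` by at most `τ/2 ‖rⁿ‖²`; summing the steps gives the bound.
-/

open scoped RealInnerProductSpace

theorem inner_smul_add_one_sub_smul_sub_eq {E : Type*} [NormedAddCommGroup E]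
    [InnerProductSpace ℝ E] (θ : ℝ) (a b : E) :
    ⟪θ • a + (1 - θ) • b, a - b⟫ = (‖a‖ ^ 2 - ‖b‖ ^ 2) / 2 + (θ - 1 / 2) * ‖a - b‖ ^ 2 := by
  rw [norm_sub_sq_real]
  simp only [inner_add_left, inner_sub_right, real_inner_smul_left, real_inner_self_eq_norm_sq,
    real_inner_comm a b]
  ring

theorem half_sub_norm_sq_le_inner_smul_add_one_sub_smul_sub {E : Type*} [NormedAddCommGroup E]
    [InnerProductSpace ℝ E] {θ : ℝ} (hθ : 1 / 2 ≤ θ) (a b : E) :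
    (‖a‖ ^ 2 - ‖b‖ ^ 2) / 2 ≤ ⟪θ • a + (1 - θ) • b, a - b⟫ := by
  rw [inner_smul_add_one_sub_smul_sub_eq]
  have : 0 ≤ (θ - 1 / 2) * ‖a - b‖ ^ 2 := mul_nonneg (by linarith) (sq_nonneg _)
  linarith

theorem mul_le_div_four_mul_sq_add_inv_mul_sq {τ : ℝ} (hτ : 0 < τ) (x y : ℝ) :
    x * y ≤ τ / 4 * x ^ 2 + τ⁻¹ * y ^ 2 := by
  have h : τ / 4 * x ^ 2 + τ⁻¹ * y ^ 2 - x * y = (τ * x - 2 * y) ^ 2 / (4 * τ) := by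
    field_simp
    ring
  have : 0 ≤ (τ * x - 2 * y) ^ 2 / (4 * τ) := by positivity
  linarith

theorem norm_sq_map_le_of_theta_step {H K : Type*} [NormedAddCommGroup H]
    [InnerProductSpace ℝ H] [NormedAddCommGroup K] [InnerProductSpace ℝ K] (B : H →ₗ[ℝ] K)
    {τ θ : ℝ} (hτ : 0 < τ) (hθ : 1 / 2 ≤ θ) {u u' r : H}
    (hstep : ∀ v : H, ⟪(1 / τ) • (u' - u), v⟫ + ⟪B (θ • u' + (1 - θ) • u), B v⟫ = ⟪r, v⟫) :
    ‖B u'‖ ^ 2 ≤ ‖B u‖ ^ 2 + τ / 2 * ‖r‖ ^ 2 := by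
  have htest := hstep (u' - u)
  rw [real_inner_smul_left, real_inner_self_eq_norm_sq, map_add, map_smul, map_smul,
    map_sub] at htest
  have henergy := half_sub_norm_sq_le_inner_smul_add_one_sub_smul_sub hθ (B u') (B u)
  have hforcing : ⟪r, u' - u⟫ ≤ τ / 4 * ‖r‖ ^ 2 + τ⁻¹ * ‖u' - u‖ ^ 2 :=
    (real_inner_le_norm _ _).trans (mul_le_div_four_mul_sq_add_inv_mul_sq hτ _ _)
  rw [one_div] at htest
  linarith

theorem le_add_sum_Icc_of_succ_le {e c : ℕ → ℝ} {N : ℕ}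
    (hstep : ∀ n < N, e (n + 1) ≤ e n + c (n + 1)) :
    ∀ n ≤ N, e n ≤ e 0 + ∑ j ∈ Finset.Icc 1 n, c j := by
  intro n hn
  induction n with
  | zero => simp
  | succ m ih =>
    rw [Finset.sum_Icc_succ_top (Nat.le_add_left 1 m)]
    linarith [ih (by omega), hstep m (by omega)]

theorem theta_scheme_energy_error_recursion
    {H K : Type*} [NormedAddCommGroup H] [InnerProductSpace ℝ H]
    [NormedAddCommGroup K] [InnerProductSpace ℝ K]
    (B : H →ₗ[ℝ] K) (τ θ : ℝ) (hτ : 0 < τ) (hθ : θ ∈ Set.Icc (1/2 : ℝ) 1)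
    (N : ℕ) (η r : ℕ → H)
    (hrec : ∀ n, 1 ≤ n → n ≤ N → ∀ v : H,
      ⟪(1 / τ) • (η n - η (n - 1)), v⟫ +
        ⟪B (θ • η n + (1 - θ) • η (n - 1)), B v⟫ = ⟪r n, v⟫) :
    ∀ n ≤ N, ‖B (η n)‖^2 ≤ ‖B (η 0)‖^2 + (τ / 2) * ∑ j ∈ Finset.Icc 1 n, ‖r j‖^2 := by
  intro n hn
  rw [Finset.mul_sum]
  refine le_add_sum_Icc_of_succ_le (e := fun n => ‖B (η n)‖ ^ 2)
    (c := fun j => τ / 2 * ‖r j‖ ^ 2) (fun m hm => ?_) n hn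
  have hstep := hrec (m + 1) (Nat.le_add_left 1 m) hm
  rw [Nat.add_sub_cancel] at hstep
  exact norm_sq_map_le_of_theta_step B hτ hθ.1 hstep
end
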